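/- Let G be a topological group that is locally connected, and let L be a normal subgroup of G which is locally connected in the subspace topology. Equip the subgroup G ×_L G := {(a,b) ∈ G × G : ab⁻¹ ∈ L} of G × G with the subspace topology of the product. Then the identity component of the topological group G ×_L G equals G⁰ ×_{L⁰} G⁰ := {(a,b) ∈ G⁰ × G⁰ : ab⁻¹ ∈ L⁰}, where G⁰ is the identity component of G and L⁰ is the identity component of the topological group L. (Lemma 2.10 of the paper; stated there for nilpotent Lie groups, local connectedness being what the proof uses.) -/

import Mathlib

/-- The relatively independent self-product `G ×_L G` of a group `G` over a normal
subgroup `L`, i.e. the subgroup `{(a₁, a₂) ∈ G × G : a₁ * a₂⁻¹ ∈ L}` of `G × G`. -/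
def relProd {G : Type*} [Group G] (L : Subgroup G) [hN : L.Normal] : Subgroup (G × G) where
  carrier := {p : G × G | p.1 * p.2⁻¹ ∈ L}
  one_mem' := by simpa using L.one_mem
  mul_mem' := by
    rintro ⟨a₁, a₂⟩ ⟨b₁, b₂⟩ ha hb
    have h : (a₁ * b₁) * (a₂ * b₂)⁻¹ = (a₁ * (b₁ * b₂⁻¹) * a₁⁻¹) * (a₁ * a₂⁻¹) := by group
    simp only [Set.mem_setOf_eq] at ha hb
    show a₁ * b₁ * (a₂ * b₂)⁻¹ ∈ L
    rw [h]
    exact mul_mem (hN.conj_mem _ hb a₁) ha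
  inv_mem' := by
    rintro ⟨a₁, a₂⟩ ha
    simp only [Set.mem_setOf_eq] at ha
    have h : a₁⁻¹ * (a₂⁻¹)⁻¹ = a₁⁻¹ * (a₁ * a₂⁻¹)⁻¹ * (a₁⁻¹)⁻¹ := by group
    show a₁⁻¹ * (a₂⁻¹)⁻¹ ∈ L
    rw [h]
    exact hN.conj_mem _ (L.inv_mem ha) a₁⁻¹

theorem mem_relProd {G : Type*} [Group G] {L : Subgroup G} [L.Normal] {p : G × G} :
    p ∈ relProd L ↔ p.1 * p.2⁻¹ ∈ L := Iff.rfl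

/-!
The map `(a, b) ↦ (b, a * b⁻¹)` is a homeomorphism `G ×_L G ≃ₜ G × L` fixing the identity, so the
identity component of `G ×_L G` corresponds to `G⁰ × L⁰`. The remaining condition `a ∈ G⁰` is then
automatic: `a = (a * b⁻¹) * b` and `L⁰ ⊆ G⁰`.
-/

theorem Homeomorph.mem_connectedComponent_iff {X Y : Type*} [TopologicalSpace X]
    [TopologicalSpace Y] (e : X ≃ₜ Y) {x y : X} :
    e x ∈ connectedComponent (e y) ↔ x ∈ connectedComponent y :=
  ⟨fun hx ↦ by simpa using e.symm.continuous.mapsTo_connectedComponent (e y) hx,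
    fun hx ↦ e.continuous.mapsTo_connectedComponent y hx⟩

section relProd

variable {G : Type*} [Group G] [TopologicalSpace G] [IsTopologicalGroup G]
  (L : Subgroup G) [L.Normal]

@[simps]
def relProdHomeomorph : relProd L ≃ₜ G × L where
  toFun p := ((p : G × G).2, ⟨(p : G × G).1 * (p : G × G).2⁻¹, p.2⟩)
  invFun q := ⟨(q.2 * q.1, q.1), by simp [mem_relProd]⟩
  left_inv p := by ext <;> simp
  right_inv q := by ext <;> simp
  continuous_toFun := by fun_prop
  continuous_invFun := by fun_prop

theorem mem_connectedComponent_one_relProd_iff (p : relProd L) :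
    p ∈ connectedComponent (1 : relProd L) ↔
      (p : G × G).2 ∈ connectedComponent (1 : G) ∧
        (⟨(p : G × G).1 * (p : G × G).2⁻¹, p.2⟩ : L) ∈ connectedComponent (1 : L) := by
  have h_one : relProdHomeomorph L 1 = (1, 1) := by ext <;> simp
  rw [← (relProdHomeomorph L).mem_connectedComponent_iff, h_one, connectedComponent_prod]
  rfl

end relProd

theorem identityComponent_relProd_general {G : Type*} [Group G] [TopologicalSpace G]
    [IsTopologicalGroup G]
    (L : Subgroup G) [L.Normal] :
    ∀ p : relProd L, p ∈ connectedComponent (1 : relProd L) ↔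
      ((p : G × G).1 ∈ connectedComponent (1 : G) ∧
       (p : G × G).2 ∈ connectedComponent (1 : G) ∧
       ∃ h : (p : G × G).1 * (p : G × G).2⁻¹ ∈ L,
         (⟨(p : G × G).1 * (p : G × G).2⁻¹, h⟩ : L) ∈ connectedComponent (1 : L)) := by
  rintro ⟨⟨a, b⟩, hab⟩
  rw [mem_connectedComponent_one_relProd_iff]
  constructor
  · rintro ⟨hb, hL⟩
    have hab₀ : a * b⁻¹ ∈ connectedComponent (1 : G) :=
      continuous_subtype_val.mapsTo_connectedComponent 1 hL
    exact ⟨by simpa using mul_mem_connectedComponent_one hab₀ hb, hb, hab, hL⟩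
  · rintro ⟨-, hb, _, hL⟩
    exact ⟨hb, hL⟩

/-- **Lemma 2.10.** If `G` is a locally connected topological group and `L` a normal subgroup
which is locally connected in the subspace topology, then the identity component of the
topological group `G ×_L G` equals `G⁰ ×_{L⁰} G⁰ = {(a,b) ∈ G⁰ × G⁰ : ab⁻¹ ∈ L⁰}`. -/
theorem identityComponent_relProd {G : Type*} [Group G] [TopologicalSpace G]
    [IsTopologicalGroup G] [LocallyConnectedSpace G]
    (L : Subgroup G) [L.Normal] [LocallyConnectedSpace L] :
    ∀ p : relProd L, p ∈ connectedComponent (1 : relProd L) ↔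
      ((p : G × G).1 ∈ connectedComponent (1 : G) ∧
       (p : G × G).2 ∈ connectedComponent (1 : G) ∧
       ∃ h : (p : G × G).1 * (p : G × G).2⁻¹ ∈ L,
         (⟨(p : G × G).1 * (p : G × G).2⁻¹, h⟩ : L) ∈ connectedComponent (1 : L)) :=
  identityComponent_relProd_general L
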